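/- For the two-dimensional Sobol' sequence (x_n) with x_n = (φ(n), φ(P_m n)), for every m ∈ ℕ and every dyadic rectangle [a/2^k, (a+1)/2^k) × [b/2^l, (b+1)/2^l) with k + l = m, 0 ≤ a < 2^k, 0 ≤ b < 2^l, exactly one of the first 2^m points x_0, ..., x_{2^m - 1} lies in the rectangle. -/

import Mathlib

/-!
The point `xₙ` lies in the box `[a/2ᵏ, (a+1)/2ᵏ) × [b/2ˡ, (b+1)/2ˡ)` iff the first `k` binary
digits of `n` read `a` and the first `l` digits of `Pₘ n` read `b`. There are `2ᵏ · 2ˡ = 2ᵐ`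
boxes, so it suffices that no two `n < 2ᵐ` share a box. Encode the digits of `n` as
`d(X) = Σ nⱼ₊₁ Xʲ ∈ 𝔽₂[X]`; as the coefficient of `Xᵗ` in `(X + 1)ʲ` is `C(j, t)`, the digits of
`Pₘ n` are the coefficients of `d(X + 1)`. For two indices in the same box the difference `d`
has degree `< m`, `Xᵏ ∣ d` and `Xˡ ∣ d(X + 1)`, i.e. `(X - 1)ˡ ∣ d`; hence `Xᵏ (X - 1)ˡ`, of
degree `m`, divides `d`, and `d = 0`.
-/

open Finset

/-- The `i`-th binary digit of `n` (1-indexed: `n = Σ nᵢ 2^(i-1)`). -/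
def bit (n i : ℕ) : ℕ := if Nat.testBit n (i-1) then 1 else 0

/-- `φ` of the digit vector of `n` truncated to `m` digits: `Σ nᵢ 2^(-i)`. -/
noncomputable def phi (m n : ℕ) : ℝ :=
  ∑ i ∈ Finset.Icc 1 m, (bit n i : ℝ) * (2:ℝ) ^ (-(i:ℤ))

/-- The `i`-th coordinate of `P_m · (digit vector of n)` over `F₂`, where
`P_m[i][j] = C(j-1, i-1) mod 2` is the upper-triangular Pascal matrix. -/
def pbit (m n i : ℕ) : ℕ :=
  (∑ j ∈ Finset.Icc 1 m, (Nat.choose (j-1) (i-1) % 2) * bit n j) % 2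

/-- `φ(P_m · n)`. -/
noncomputable def phiP (m n : ℕ) : ℝ :=
  ∑ i ∈ Finset.Icc 1 m, (pbit m n i : ℝ) * (2:ℝ) ^ (-(i:ℤ))

/-- The `n`-th point of the two-dimensional Sobol' sequence (with `n < 2^m`). -/
noncomputable def sobol (m n : ℕ) : ℝ × ℝ := (phi m n, phiP m n)

/-- ℓ^∞ distance on ℝ². -/
noncomputable def linf (a b : ℝ × ℝ) : ℝ := max |a.1 - b.1| |a.2 - b.2|

/-- ℓ^∞ separation radius of the first `N` Sobol' points (digit length `m`). -/
noncomputable def sep (m N : ℕ) : ℝ :=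
  (1/2) * sInf {d : ℝ | ∃ p q : ℕ, p < N ∧ q < N ∧ p ≠ q ∧ d = linf (sobol m p) (sobol m q)}

/-- ℓ^∞ covering radius of the first `N` Sobol' points (digit length `m`). -/
noncomputable def cov (m N : ℕ) : ℝ :=
  sSup {r : ℝ | ∃ x : ℝ × ℝ, x.1 ∈ Set.Icc (0:ℝ) 1 ∧ x.2 ∈ Set.Icc (0:ℝ) 1 ∧
    r = sInf {d : ℝ | ∃ n : ℕ, n < N ∧ d = linf x (sobol m n)}}


open Polynomial

def binaryValue (k : ℕ) (c : ℕ → ℕ) : ℕ := ∑ i ∈ Icc 1 k, c i * 2 ^ (k - i)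

noncomputable def binarySum (m : ℕ) (c : ℕ → ℕ) : ℝ :=
  ∑ i ∈ Icc 1 m, (c i : ℝ) * (2:ℝ) ^ (-(i:ℤ))

lemma phi_eq_binarySum (m n : ℕ) : phi m n = binarySum m (bit n) := rfl

lemma phiP_eq_binarySum (m n : ℕ) : phiP m n = binarySum m (pbit m n) := rfl

section BinaryDigits

variable {c c' : ℕ → ℕ}

lemma binaryValue_succ (k : ℕ) (c : ℕ → ℕ) :
    binaryValue (k + 1) c = c (k + 1) + 2 * binaryValue k c := by
  rw [binaryValue, sum_Icc_succ_top (by omega), binaryValue, mul_sum, Nat.sub_self, pow_zero,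
    mul_one, add_comm]
  congr 1
  refine sum_congr rfl fun i hi => ?_
  rw [show k + 1 - i = k - i + 1 by grind, pow_succ]
  ring

lemma binaryValue_lt (hc : ∀ i, c i ≤ 1) (k : ℕ) : binaryValue k c < 2 ^ k := by
  induction k with
  | zero => simp [binaryValue]
  | succ k ih => rw [binaryValue_succ, pow_succ]; grind

lemma binaryValue_add (k l : ℕ) (c : ℕ → ℕ) :
    binaryValue (k + l) c = binaryValue k c * 2 ^ l + binaryValue l (fun i => c (k + i)) := by
  induction l with
  | zero => simp [binaryValue]
  | succ l ih =>
    rw [← add_assoc, binaryValue_succ, ih, binaryValue_succ, pow_succ, add_assoc k]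
    ring

lemma eq_of_binaryValue_eq (hc : ∀ i, c i ≤ 1) (hc' : ∀ i, c' i ≤ 1) {k : ℕ}
    (h : binaryValue k c = binaryValue k c') : ∀ i ∈ Icc 1 k, c i = c' i := by
  induction k with
  | zero => simp
  | succ k ih =>
    rw [binaryValue_succ, binaryValue_succ] at h
    have hlast : c (k + 1) = c' (k + 1) := by grind
    intro i hi
    rcases (mem_Icc.mp hi).2.lt_or_eq with hik | rfl
    · exact ih (by grind) i (mem_Icc.mpr ⟨(mem_Icc.mp hi).1, by omega⟩)
    · exact hlast

lemma binarySum_eq_binaryValue_div (m : ℕ) (c : ℕ → ℕ) :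
    binarySum m c = binaryValue m c / 2 ^ m := by
  rw [binarySum, binaryValue, Nat.cast_sum, sum_div]
  refine sum_congr rfl fun i hi => ?_
  rw [Nat.cast_mul, mul_div_assoc, Nat.cast_pow, Nat.cast_ofNat, ← zpow_natCast,
    ← zpow_natCast, ← zpow_sub₀ two_ne_zero, Nat.cast_sub (mem_Icc.mp hi).2]
  ring_nf

lemma floor_binarySum_mul_two_pow (hc : ∀ i, c i ≤ 1) {k m : ℕ} (hkm : k ≤ m) :
    ⌊binarySum m c * 2 ^ k⌋ = binaryValue k c := by
  obtain ⟨l, rfl⟩ := Nat.exists_eq_add_of_le hkm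
  have htail := binaryValue_lt (fun i => hc (k + i)) l
  have hscale : binarySum (k + l) c * 2 ^ k = (binaryValue (k + l) c : ℝ) / 2 ^ l := by
    rw [binarySum_eq_binaryValue_div, pow_add]
    field_simp
  have htail' : (binaryValue l (fun i => c (k + i)) : ℝ) < 2 ^ l := by exact_mod_cast htail
  rw [hscale, Int.floor_eq_iff, le_div_iff₀ (by positivity), div_lt_iff₀ (by positivity),
    binaryValue_add]
  push_cast
  constructor <;> nlinarith

end BinaryDigits

lemma mem_Ico_div_iff_floor_eq {x r : ℝ} (hr : 0 < r) (a : ℤ) :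
    x ∈ Set.Ico (a / r) ((a + 1) / r) ↔ ⌊x * r⌋ = a := by
  rw [Int.floor_eq_iff, Set.mem_Ico, div_le_iff₀ hr, lt_div_iff₀ hr]

lemma binarySum_mem_Ico_iff {c : ℕ → ℕ} (hc : ∀ i, c i ≤ 1) {k m : ℕ} (hkm : k ≤ m) (a : ℕ) :
    binarySum m c ∈ Set.Ico ((a : ℝ) / 2 ^ k) (((a : ℝ) + 1) / 2 ^ k) ↔ binaryValue k c = a := by
  have := mem_Ico_div_iff_floor_eq (x := binarySum m c) (r := 2 ^ k) (by positivity) a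
  rw [Int.cast_natCast, floor_binarySum_mul_two_pow hc hkm] at this
  rw [this, Nat.cast_inj]

section Polynomial

variable {R : Type*} [CommRing R] {p : R[X]} {k l : ℕ}

lemma X_sub_one_pow_dvd_of_X_pow_dvd_comp (hl : X ^ l ∣ p.comp (X + 1)) : (X - 1) ^ l ∣ p := by
  obtain ⟨r, hr⟩ := hl
  refine ⟨r.comp (X - 1), ?_⟩
  calc p = (p.comp (X + 1)).comp (X - 1) := by simp [comp_assoc]
    _ = (X - 1) ^ l * r.comp (X - 1) := by rw [hr, mul_comp, pow_comp, X_comp]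

lemma eq_zero_of_X_pow_dvd_of_X_sub_one_pow_dvd [IsDomain R] (hdeg : p.degree < (k + l : ℕ))
    (hk : X ^ k ∣ p) (hl : (X - 1) ^ l ∣ p) : p = 0 := by
  have hcop : IsCoprime (X : R[X]) (X - 1) := ⟨1, -1, by ring⟩
  refine eq_zero_of_dvd_of_degree_lt (hcop.pow.mul_dvd hk hl) ?_
  rwa [degree_mul, degree_pow, degree_pow, degree_X, ← C_1, degree_X_sub_C, nsmul_one, nsmul_one,
    ← Nat.cast_add]

end Polynomial

lemma bit_le_one (n i : ℕ) : bit n i ≤ 1 := by unfold bit; split <;> omega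

lemma pbit_le_one (m n i : ℕ) : pbit m n i ≤ 1 := Nat.le_of_lt_succ (Nat.mod_lt _ two_pos)

noncomputable def digitPoly (m n : ℕ) : (ZMod 2)[X] :=
  ∑ j ∈ range m, C (bit n (j + 1) : ZMod 2) * X ^ j

lemma coeff_digitPoly (m n t : ℕ) :
    (digitPoly m n).coeff t = if t < m then (bit n (t + 1) : ZMod 2) else 0 := by
  simp [digitPoly, finsetSum_coeff, coeff_X_pow]

lemma coeff_digitPoly_comp (m n t : ℕ) :
    ((digitPoly m n).comp (X + 1)).coeff t = (pbit m n (t + 1) : ZMod 2) := by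
  rw [pbit, ZMod.natCast_mod, Nat.cast_sum, digitPoly, Polynomial.sum_comp, finsetSum_coeff,
    show Icc 1 m = Ico 1 (m + 1) from rfl, sum_Ico_eq_sum_range, Nat.add_sub_cancel]
  refine sum_congr rfl fun j _ => ?_
  rw [mul_comp, C_comp, pow_comp, X_comp, coeff_C_mul, coeff_X_add_one_pow, Nat.cast_mul,
    ZMod.natCast_mod, add_comm 1 j, Nat.add_sub_cancel, Nat.add_sub_cancel, mul_comm]

lemma degree_digitPoly_lt (m n : ℕ) : (digitPoly m n).degree < m := by
  rw [degree_lt_iff_coeff_zero]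
  intro t ht
  rw [coeff_digitPoly, if_neg (by omega)]

lemma eq_of_digitPoly_eq {m n n' : ℕ} (hn : n < 2 ^ m) (hn' : n' < 2 ^ m)
    (h : digitPoly m n = digitPoly m n') : n = n' := by
  refine Nat.eq_of_testBit_eq fun t => ?_
  by_cases ht : t < m
  · have hcoeff := congrArg (coeff · t) h
    simp only [coeff_digitPoly, ht, if_true, bit, Nat.add_sub_cancel] at hcoeff
    by_cases hb : n.testBit t <;> by_cases hb' : n'.testBit t <;> simp_all
  · have hle : 2 ^ m ≤ 2 ^ t := Nat.pow_le_pow_right two_pos (by omega)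
    rw [Nat.testBit_eq_false_of_lt (by omega), Nat.testBit_eq_false_of_lt (by omega)]

def boxIndex (k l m n : ℕ) : ℕ × ℕ := (binaryValue k (bit n), binaryValue l (pbit m n))

lemma boxIndex_injOn {k l m : ℕ} (hkl : k + l = m) :
    Set.InjOn (boxIndex k l m) (range (2 ^ m) : Set ℕ) := by
  intro n hn n' hn' h
  obtain ⟨hfst, hsnd⟩ := Prod.ext_iff.mp h
  have hbit := eq_of_binaryValue_eq (bit_le_one n) (bit_le_one n') hfst
  have hpbit := eq_of_binaryValue_eq (pbit_le_one m n) (pbit_le_one m n') hsnd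
  refine eq_of_digitPoly_eq (mem_range.mp hn) (mem_range.mp hn') (sub_eq_zero.mp ?_)
  refine eq_zero_of_X_pow_dvd_of_X_sub_one_pow_dvd (k := k) (l := l) ?_ ?_ ?_
  · rw [hkl]
    exact (degree_sub_le _ _).trans_lt
      (max_lt (degree_digitPoly_lt m n) (degree_digitPoly_lt m n'))
  · refine X_pow_dvd_iff.mpr fun t ht => ?_
    rw [coeff_sub, coeff_digitPoly, coeff_digitPoly, hbit (t + 1) (by grind), sub_self]
  · refine X_sub_one_pow_dvd_of_X_pow_dvd_comp (X_pow_dvd_iff.mpr fun t ht => ?_)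
    rw [sub_comp, coeff_sub, coeff_digitPoly_comp, coeff_digitPoly_comp,
      hpbit (t + 1) (by grind), sub_self]

theorem stmt_11 (m k l a b : ℕ) (hkl : k + l = m) (ha : a < 2 ^ k) (hb : b < 2 ^ l) :
    ∃! n : ℕ, n < 2 ^ m ∧
      phi m n ∈ Set.Ico ((a : ℝ) / 2 ^ k) (((a : ℝ) + 1) / 2 ^ k) ∧
      phiP m n ∈ Set.Ico ((b : ℝ) / 2 ^ l) (((b : ℝ) + 1) / 2 ^ l) := by
  have hmem_box : ∀ n, (phi m n ∈ Set.Ico ((a : ℝ) / 2 ^ k) (((a : ℝ) + 1) / 2 ^ k) ∧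
      phiP m n ∈ Set.Ico ((b : ℝ) / 2 ^ l) (((b : ℝ) + 1) / 2 ^ l)) ↔ boxIndex k l m n = (a, b) :=
    fun n => by
      rw [phi_eq_binarySum, phiP_eq_binarySum, binarySum_mem_Ico_iff (bit_le_one n) (by omega),
        binarySum_mem_Ico_iff (pbit_le_one m n) (by omega), boxIndex, Prod.mk_inj]
  have hmaps : Set.MapsTo (boxIndex k l m) (range (2 ^ m) : Set ℕ)
      (range (2 ^ k) ×ˢ range (2 ^ l) : Finset (ℕ × ℕ)) := fun n _ => by
    simp [boxIndex, binaryValue_lt (bit_le_one n), binaryValue_lt (pbit_le_one m n)]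
  have hinj := boxIndex_injOn hkl
  obtain ⟨n, hn, hbox⟩ := surjOn_of_injOn_of_card_le _ hmaps hinj
    (by simp [← pow_add, hkl]) (by simp [ha, hb] : (a, b) ∈ range (2 ^ k) ×ˢ range (2 ^ l))
  refine ⟨n, ⟨mem_range.mp hn, (hmem_box n).mpr hbox⟩, fun n' ⟨hn', hmem⟩ => ?_⟩
  exact hinj (mem_range.mpr hn') hn (((hmem_box n').mp hmem).trans hbox.symm)
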